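/- arXiv:2004.02345 — 4 statements merged into one kernel-verified Lean document; each statement's English description precedes it below -/
import Mathlib

section
/- Let κ > 0 and r > 0, and let u, w ∈ ℝⁿ satisfy ⟨u, w − r·u⟩ ≥ (1/κ)·‖w − r·u‖². Then ⟨w, u⟩ ≥ (1/(κ + 2r))·‖w‖². -/
open RealInnerProductSpace

theorem norm_add_smul_sq_le_mul_inner {E : Type*} [NormedAddCommGroup E]
    [InnerProductSpace ℝ E] {κ r : ℝ} (hr : 0 ≤ r) (hκr : 0 ≤ κ + r) {u v : E}
    (h : ‖v‖ ^ 2 ≤ κ * ⟪u, v⟫) :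
    ‖v + r • u‖ ^ 2 ≤ (κ + 2 * r) * ⟪v + r • u, u⟫ := by
  have expand_norm : ‖v + r • u‖ ^ 2 = ‖v‖ ^ 2 + 2 * r * ⟪u, v⟫ + r ^ 2 * ‖u‖ ^ 2 := by
    rw [norm_add_sq_real, real_inner_smul_right, norm_smul, mul_pow, Real.norm_eq_abs,
      sq_abs, real_inner_comm]
    ring
  have expand_inner : ⟪v + r • u, u⟫ = ⟪u, v⟫ + r * ‖u‖ ^ 2 := by
    rw [inner_add_left, real_inner_smul_left, real_inner_self_eq_norm_sq, real_inner_comm]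
  rw [expand_norm, expand_inner]
  -- the right side minus the left side is `(κ ⟪u, v⟫ - ‖v‖²) + r (κ + r) ‖u‖²`
  linarith [mul_nonneg (mul_nonneg hr hκr) (sq_nonneg ‖u‖)]

theorem stmt0 (n : ℕ) (κ r : ℝ) (hκ : 0 < κ) (hr : 0 < r)
    (u w : EuclideanSpace ℝ (Fin n))
    (h : (inner ℝ u (w - r • u) : ℝ) ≥ (1/κ) * ‖w - r • u‖^2) :
    (inner ℝ w u : ℝ) ≥ (1/(κ + 2*r)) * ‖w‖^2 := by
  have hv : ‖w - r • u‖ ^ 2 ≤ κ * ⟪u, w - r • u⟫ := by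
    rw [ge_iff_le, one_div_mul_eq_div, div_le_iff₀ hκ] at h
    linarith
  have key := norm_add_smul_sq_le_mul_inner hr.le (by linarith) hv
  rw [sub_add_cancel] at key
  rw [ge_iff_le, one_div_mul_eq_div, div_le_iff₀ (by linarith)]
  linarith
end

section
/- Define ψ: ℝ → ℝ by ψ(x) = x²·sin(1/x) + 2x for x ≠ 0 and ψ(0) = 0. Then ψ is not semismooth* at 0; concretely, there exists ε₀ > 0 and for every δ > 0 a point x with 0 < |x| < δ such that |ψ(x) − ψ(0) − ψ'(x)·(x − 0)| ≥ ε₀·|x|. -/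
/-! Away from `0`, `ψ x - ψ 0 - ψ'(x) x = x cos(1/x) - x² sin(1/x)`. At `x = 1/(kπ)` the sine
vanishes and the cosine is `±1`, so the residual has size exactly `|x|`, which is not `o(|x|)`. -/

noncomputable def ψ (x : ℝ) : ℝ := if x = 0 then 0 else x^2 * Real.sin (1/x) + 2*x

open Real

lemma hasDerivAt_ψ {x : ℝ} (hx : x ≠ 0) :
    HasDerivAt ψ (2 * x * sin (1 / x) - cos (1 / x) + 2) x := by
  have hinv : HasDerivAt (fun y : ℝ => 1 / y) (-(1 / x ^ 2)) x := by
    simpa only [one_div] using hasDerivAt_inv hx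
  have hformula : HasDerivAt (fun y : ℝ => y ^ 2 * sin (1 / y) + 2 * y)
      (2 * x * sin (1 / x) - cos (1 / x) + 2) x := by
    refine (((hasDerivAt_pow 2 x).mul ((hasDerivAt_sin _).comp x hinv)).add
      ((hasDerivAt_id x).const_mul 2)).congr_deriv ?_
    simp only [Function.comp_apply]
    field_simp
    ring
  refine hformula.congr_of_eventuallyEq ?_
  filter_upwards [isOpen_ne.mem_nhds hx] with y hy
  simp [ψ, hy]

lemma ψ_sub_ψ_zero_sub_deriv_mul {x : ℝ} (hx : x ≠ 0) :
    ψ x - ψ 0 - deriv ψ x * (x - 0) = x * cos (1 / x) - x ^ 2 * sin (1 / x) := by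
  rw [(hasDerivAt_ψ hx).deriv]
  simp only [ψ, hx, if_true, if_false]
  ring

lemma abs_ψ_residual_inv_nat_mul_pi {k : ℕ} (hk : k ≠ 0) :
    |ψ (1 / (k * π)) - ψ 0 - deriv ψ (1 / (k * π)) * (1 / (k * π) - 0)| = |1 / (k * π)| := by
  have hx : 1 / (k * π) ≠ 0 := by positivity
  rw [ψ_sub_ψ_zero_sub_deriv_mul hx, one_div_one_div, sin_nat_mul_pi, cos_nat_mul_pi,
    mul_zero, sub_zero, abs_mul, abs_pow, abs_neg, abs_one, one_pow, mul_one]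

theorem stmt3 : ∃ ε₀ > (0:ℝ), ∀ δ > (0:ℝ), ∃ x : ℝ, 0 < |x| ∧ |x| < δ ∧
    |ψ x - ψ 0 - deriv ψ x * (x - 0)| ≥ ε₀ * |x| := by
  refine ⟨1, one_pos, fun δ hδ => ?_⟩
  obtain ⟨n, hn⟩ := exists_nat_one_div_lt (mul_pos pi_pos hδ)
  have hx : 0 < 1 / ((n + 1 : ℕ) * π) := by positivity
  have hxδ : 1 / ((n + 1 : ℕ) * π) < δ := by
    rw [div_lt_iff₀ (by positivity)] at hn ⊢
    push_cast
    linarith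
  refine ⟨_, abs_pos.2 hx.ne', (abs_of_pos hx).trans_lt hxδ, ?_⟩
  rw [abs_ψ_residual_inv_nat_mul_pi n.succ_ne_zero, one_mul]
end

section
/- Let φ: ℝⁿ → ℝ be continuously differentiable with ∇φ Lipschitz with constant ℓ near a tilt-stable minimizer x̄ (∇φ(x̄) = 0) such that φ(y) − φ(x) ≤ ⟨∇φ(y), y − x⟩ − (1/(2κ))‖y − x‖² for all x, y near x̄. Let (x_k) → x̄ with x_k ≠ x̄, d_k := x_{k+1} − x_k, and assume ‖x_{k+1} − x̄‖ = o(‖d_k‖) and ‖x_k − x̄‖/‖d_k‖ → 1. Then for any μ ∈ (0, 1/(4ℓκ)) there is k̄ such that for all k ≥ k̄: φ(x_k + d_k) ≤ φ(x_k) + μ⟨∇φ(x_k), d_k⟩. -/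
/-!
Write `d = y - x` for the unit step from `x = xₖ` to `y = xₖ₊₁`. Since `∇φ(x̄) = 0`, the Lipschitz
property gives `‖∇φ(z)‖ ≤ ℓ ‖z - x̄‖`, so by Cauchy–Schwarz `⟪∇φ(y), d⟫ ≤ ℓ qₖ ‖d‖²` and
`⟪∇φ(x), d⟫ ≥ -ℓ rₖ ‖d‖²`, where `qₖ = ‖y - x̄‖/‖d‖ → 0` and `rₖ = ‖x - x̄‖/‖d‖ → 1`. Inserting these
into the decrease estimate, the Armijo inequality follows once `ℓ qₖ + μ ℓ rₖ ≤ 1/(2κ)`, and the left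
side tends to `μℓ < 1/(4κ)`.
-/

open Filter Topology

lemma norm_le_mul_norm_sub_of_lipschitzOnWith {E F : Type*} [SeminormedAddCommGroup E]
    [SeminormedAddCommGroup F] {f : E → F} {s : Set E} {K : NNReal} {a z : E}
    (hf : LipschitzOnWith K f s) (ha : a ∈ s) (hfa : f a = 0) (hz : z ∈ s) :
    ‖f z‖ ≤ K * ‖z - a‖ := by
  simpa [hfa, dist_eq_norm] using hf.dist_le_mul z hz a ha

lemma le_add_mul_inner_of_sub_le_inner {E : Type*} [NormedAddCommGroup E] [InnerProductSpace ℝ E]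
    {φ : E → ℝ} {x y gx gy : E} {a b c μ : ℝ}
    (hdec : φ y - φ x ≤ inner ℝ gy (y - x) - c * ‖y - x‖ ^ 2)
    (hgy : ‖gy‖ ≤ a * ‖y - x‖) (hgx : ‖gx‖ ≤ b * ‖y - x‖) (hμ : 0 ≤ μ) (habc : a + μ * b ≤ c) :
    φ y ≤ φ x + μ * inner ℝ gx (y - x) := by
  have hd := norm_nonneg (y - x)
  have hy : inner ℝ gy (y - x) ≤ a * ‖y - x‖ ^ 2 :=
    calc inner ℝ gy (y - x) ≤ ‖gy‖ * ‖y - x‖ := real_inner_le_norm _ _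
      _ ≤ a * ‖y - x‖ * ‖y - x‖ := by gcongr
      _ = a * ‖y - x‖ ^ 2 := by ring
  have hx : -(b * ‖y - x‖ ^ 2) ≤ inner ℝ gx (y - x) :=
    calc -(b * ‖y - x‖ ^ 2) = -(b * ‖y - x‖ * ‖y - x‖) := by ring
      _ ≤ -(‖gx‖ * ‖y - x‖) := by gcongr
      _ ≤ inner ℝ gx (y - x) := neg_le_of_abs_le (abs_real_inner_le_norm _ _)
  nlinarith [mul_le_mul_of_nonneg_right habc (sq_nonneg ‖y - x‖)]

theorem stmt16_general (n : ℕ) (φ : EuclideanSpace ℝ (Fin n) → ℝ) (xb : EuclideanSpace ℝ (Fin n))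
    (ℓ κ μ ρ : ℝ) (hℓ : 0 < ℓ) (hκ : 0 < κ) (hρ : 0 < ρ)
    (hlip : LipschitzOnWith (Real.toNNReal ℓ) (gradient φ) (Metric.ball xb ρ))
    (hgrad0 : gradient φ xb = 0)
    (hdec : ∀ x ∈ Metric.ball xb ρ, ∀ y ∈ Metric.ball xb ρ,
      φ y - φ x ≤ (inner ℝ (gradient φ y) (y - x) : ℝ) - (1/(2*κ)) * ‖y - x‖^2)
    (x : ℕ → EuclideanSpace ℝ (Fin n))
    (hconv : Filter.Tendsto x Filter.atTop (nhds xb))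
    (hq : Filter.Tendsto (fun k => ‖x (k+1) - xb‖ / ‖x (k+1) - x k‖) Filter.atTop (nhds 0))
    (hr : Filter.Tendsto (fun k => ‖x k - xb‖ / ‖x (k+1) - x k‖) Filter.atTop (nhds 1))
    (hμ0 : 0 < μ) (hμ1 : μ < 1/(4*ℓ*κ)) :
    ∃ kb : ℕ, ∀ k ≥ kb,
      φ (x k + (x (k+1) - x k)) ≤
        φ (x k) + μ * (inner ℝ (gradient φ (x k)) (x (k+1) - x k) : ℝ) := by
  have hgrad : ∀ z ∈ Metric.ball xb ρ, ‖gradient φ z‖ ≤ ℓ * ‖z - xb‖ := fun z hz => by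
    simpa [Real.coe_toNNReal ℓ hℓ.le] using
      norm_le_mul_norm_sub_of_lipschitzOnWith hlip (Metric.mem_ball_self hρ) hgrad0 hz
  have hμℓ : ℓ * 0 + μ * (ℓ * 1) < 1 / (2 * κ) := by
    rw [lt_div_iff₀ (by positivity)] at hμ1 ⊢
    nlinarith [mul_pos (mul_pos hμ0 hℓ) hκ]
  have hball := Metric.ball_mem_nhds xb hρ
  have hx : ∀ᶠ k in atTop, x k ∈ Metric.ball xb ρ := hconv hball
  have hx' : ∀ᶠ k in atTop, x (k + 1) ∈ Metric.ball xb ρ :=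
    (hconv.comp (tendsto_add_atTop_nat 1)) hball
  have hstep : ∀ᶠ k in atTop, ‖x (k + 1) - x k‖ ≠ 0 :=
    (hr.eventually_ne one_ne_zero).mono fun k hk h => hk (by rw [h, div_zero])
  have hratio := ((hq.const_mul ℓ).add ((hr.const_mul ℓ).const_mul μ)).eventually_lt_const hμℓ
  obtain ⟨kb, hkb⟩ := (hx.and (hx'.and (hstep.and hratio))).exists_forall_of_atTop
  refine ⟨kb, fun k hk => ?_⟩
  obtain ⟨hxk, hxk', hd, hlt⟩ := hkb k hk
  rw [add_sub_cancel]
  refine le_add_mul_inner_of_sub_le_inner (hdec _ hxk _ hxk') ?_ ?_ hμ0.le hlt.le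
  · rw [mul_assoc, div_mul_cancel₀ _ hd]
    exact hgrad _ hxk'
  · rw [mul_assoc, div_mul_cancel₀ _ hd]
    exact hgrad _ hxk

theorem stmt16 (n : ℕ) (φ : EuclideanSpace ℝ (Fin n) → ℝ) (xb : EuclideanSpace ℝ (Fin n))
    (ℓ κ μ ρ : ℝ) (hℓ : 0 < ℓ) (hκ : 0 < κ) (hρ : 0 < ρ)
    (hC1 : ContDiffOn ℝ 1 φ (Metric.ball xb ρ))
    (hlip : LipschitzOnWith (Real.toNNReal ℓ) (gradient φ) (Metric.ball xb ρ))
    (hgrad0 : gradient φ xb = 0)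
    (hdec : ∀ x ∈ Metric.ball xb ρ, ∀ y ∈ Metric.ball xb ρ,
      φ y - φ x ≤ (inner ℝ (gradient φ y) (y - x) : ℝ) - (1/(2*κ)) * ‖y - x‖^2)
    (x : ℕ → EuclideanSpace ℝ (Fin n))
    (hconv : Filter.Tendsto x Filter.atTop (nhds xb)) (hne : ∀ k, x k ≠ xb)
    (hq : Filter.Tendsto (fun k => ‖x (k+1) - xb‖ / ‖x (k+1) - x k‖) Filter.atTop (nhds 0))
    (hr : Filter.Tendsto (fun k => ‖x k - xb‖ / ‖x (k+1) - x k‖) Filter.atTop (nhds 1))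
    (hμ0 : 0 < μ) (hμ1 : μ < 1/(4*ℓ*κ)) :
    ∃ kb : ℕ, ∀ k ≥ kb,
      φ (x k + (x (k+1) - x k)) ≤
        φ (x k) + μ * (inner ℝ (gradient φ (x k)) (x (k+1) - x k) : ℝ) :=
  stmt16_general n φ xb ℓ κ μ ρ hℓ hκ hρ hlip hgrad0 hdec x hconv hq hr hμ0 hμ1
end

section
/- Let Ω ⊆ ℝⁿ × ℝⁿ and (x̄, v̄) ∈ Ω, let κ > 0, η > 0, and suppose ⟨u, w⟩ ≥ (1/κ)‖w‖² for all (w, u) ∈ T_Ω(x, v) whenever (x, v) ∈ Ω with ‖(x, v) − (x̄, 0)‖ ≤ η. Fix r > 0 and let G := { (x, v) : (x − r·v, v) ∈ Ω }. Then there is η' > 0 such that ⟨w, u⟩ ≥ (1/(κ + 2r))‖w‖² for all (w, u) ∈ T_G(x, v) whenever (x, v) ∈ G with ‖(x, v) − (x̄ + r·v̄, v̄)‖ ≤ η' and v̄ = 0. -/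
/-!
The graph `G` is the preimage of `Ω` under the linear shear `(x, v) ↦ (x - r • v, v)`, so the
shear maps `T_G(x, v)` into `T_Ω(x - r • v, v)` and moves points near `(x̄, 0)` by a factor at
most `1 + r`. For `(w, u) ∈ T_G(x, v)` the hypothesis at the sheared point reads
`κ (⟪w, u⟫ - r‖u‖²) ≥ ‖w‖² - 2r⟪w, u⟫ + r²‖u‖²`, i.e.
`(κ + 2r) ⟪w, u⟫ ≥ ‖w‖² + r (r + κ) ‖u‖² ≥ ‖w‖²`.
-/

open Set

theorem ContinuousLinearMap.mapsTo_tangentConeAt_preimage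
    {𝕜 E F : Type*} [NontriviallyNormedField 𝕜] [NormedAddCommGroup E] [NormedSpace 𝕜 E]
    [NormedAddCommGroup F] [NormedSpace 𝕜 F] (L : E →L[𝕜] F) (s : Set F) (x : E) :
    MapsTo L (tangentConeAt 𝕜 (L ⁻¹' s) x) (tangentConeAt 𝕜 s (L x)) := fun _ hy ↦
  tangentConeAt_mono (image_preimage_subset L s) (L.hasFDerivWithinAt.mapsTo_tangent_cone hy)

section Shear

variable {E : Type*} [NormedAddCommGroup E] [NormedSpace ℝ E]

def shear (r : ℝ) : E × E →L[ℝ] E × E :=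
  (ContinuousLinearMap.fst ℝ E E - r • ContinuousLinearMap.snd ℝ E E).prod
    (ContinuousLinearMap.snd ℝ E E)

@[simp]
theorem shear_apply (r : ℝ) (p : E × E) : shear r p = (p.1 - r • p.2, p.2) := rfl

theorem norm_shear_le {r : ℝ} (hr : 0 ≤ r) (p : E × E) : ‖shear r p‖ ≤ (1 + r) * ‖p‖ := by
  have h₁ : ‖p.1‖ ≤ ‖p‖ := norm_fst_le p
  have h₂ : ‖p.2‖ ≤ ‖p‖ := norm_snd_le p
  rw [shear_apply, Prod.norm_def]
  refine max_le ?_ (by nlinarith [norm_nonneg p])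
  calc ‖p.1 - r • p.2‖ ≤ ‖p.1‖ + r * ‖p.2‖ := by
        simpa [norm_smul, abs_of_nonneg hr] using norm_sub_le p.1 (r • p.2)
    _ ≤ (1 + r) * ‖p‖ := by nlinarith

end Shear

theorem inner_ge_of_inner_shear_ge {F : Type*} [NormedAddCommGroup F] [InnerProductSpace ℝ F]
    {κ r : ℝ} (hκ : 0 < κ) (hr : 0 ≤ r) {w u : F}
    (h : inner ℝ u (w - r • u) ≥ 1 / κ * ‖w - r • u‖ ^ 2) :
    inner ℝ w u ≥ 1 / (κ + 2 * r) * ‖w‖ ^ 2 := by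
  rw [inner_sub_right, real_inner_smul_right, real_inner_self_eq_norm_sq, real_inner_comm,
    norm_sub_sq_real, norm_smul, real_inner_smul_right, Real.norm_of_nonneg hr, ge_iff_le,
    one_div_mul_eq_div, div_le_iff₀ hκ] at h
  rw [ge_iff_le, one_div_mul_eq_div, div_le_iff₀ (by linarith)]
  nlinarith [mul_nonneg (mul_nonneg hr (add_nonneg hr hκ.le)) (sq_nonneg ‖u‖)]

theorem stmt17_general (n : ℕ)
    (Ω : Set (EuclideanSpace ℝ (Fin n) × EuclideanSpace ℝ (Fin n)))
    (xb vb : EuclideanSpace ℝ (Fin n))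
    (κ η r : ℝ) (hκ : 0 < κ) (hη : 0 < η) (hr : 0 < r) (hvb : vb = 0)
    (hΩ : ∀ x v : EuclideanSpace ℝ (Fin n), (x, v) ∈ Ω →
      ‖(x, v) - (xb, (0 : EuclideanSpace ℝ (Fin n)))‖ ≤ η →
      ∀ w u : EuclideanSpace ℝ (Fin n), (w, u) ∈ tangentConeAt ℝ Ω (x, v) →
        (inner ℝ u w : ℝ) ≥ (1/κ) * ‖w‖^2) :
    ∃ η' > (0:ℝ), ∀ x v : EuclideanSpace ℝ (Fin n),
      (x, v) ∈ {p : EuclideanSpace ℝ (Fin n) × EuclideanSpace ℝ (Fin n) |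
        (p.1 - r • p.2, p.2) ∈ Ω} →
      ‖(x, v) - (xb + r • vb, vb)‖ ≤ η' →
      ∀ w u : EuclideanSpace ℝ (Fin n),
        (w, u) ∈ tangentConeAt ℝ {p : EuclideanSpace ℝ (Fin n) × EuclideanSpace ℝ (Fin n) |
          (p.1 - r • p.2, p.2) ∈ Ω} (x, v) →
        (inner ℝ w u : ℝ) ≥ (1/(κ + 2*r)) * ‖w‖^2 := by
  subst hvb
  refine ⟨η / (1 + r), by positivity, fun x v hxv hnorm w u hwu ↦ ?_⟩
  rw [smul_zero, add_zero] at hnorm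
  have hclose : ‖(x - r • v, v) - (xb, 0)‖ ≤ η :=
    calc ‖(x - r • v, v) - (xb, 0)‖ = ‖shear r ((x, v) - (xb, 0))‖ := by simp [sub_right_comm]
      _ ≤ (1 + r) * ‖(x, v) - (xb, 0)‖ := norm_shear_le hr.le _
      _ ≤ (1 + r) * (η / (1 + r)) := by gcongr
      _ = η := by field_simp
  exact inner_ge_of_inner_shear_ge hκ hr.le
    (hΩ _ _ hxv hclose _ _ ((shear r).mapsTo_tangentConeAt_preimage Ω _ hwu))

theorem stmt17 (n : ℕ)
    (Ω : Set (EuclideanSpace ℝ (Fin n) × EuclideanSpace ℝ (Fin n)))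
    (xb vb : EuclideanSpace ℝ (Fin n)) (hmem : (xb, vb) ∈ Ω)
    (κ η r : ℝ) (hκ : 0 < κ) (hη : 0 < η) (hr : 0 < r) (hvb : vb = 0)
    (hΩ : ∀ x v : EuclideanSpace ℝ (Fin n), (x, v) ∈ Ω →
      ‖(x, v) - (xb, (0 : EuclideanSpace ℝ (Fin n)))‖ ≤ η →
      ∀ w u : EuclideanSpace ℝ (Fin n), (w, u) ∈ tangentConeAt ℝ Ω (x, v) →
        (inner ℝ u w : ℝ) ≥ (1/κ) * ‖w‖^2) :
    ∃ η' > (0:ℝ), ∀ x v : EuclideanSpace ℝ (Fin n),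
      (x, v) ∈ {p : EuclideanSpace ℝ (Fin n) × EuclideanSpace ℝ (Fin n) |
        (p.1 - r • p.2, p.2) ∈ Ω} →
      ‖(x, v) - (xb + r • vb, vb)‖ ≤ η' →
      ∀ w u : EuclideanSpace ℝ (Fin n),
        (w, u) ∈ tangentConeAt ℝ {p : EuclideanSpace ℝ (Fin n) × EuclideanSpace ℝ (Fin n) |
          (p.1 - r • p.2, p.2) ∈ Ω} (x, v) →
        (inner ℝ w u : ℝ) ≥ (1/(κ + 2*r)) * ‖w‖^2 :=
  stmt17_general n Ω xb vb κ η r hκ hη hr hvb hΩ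
end
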